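/- arXiv:2512.05549 — 8 statements merged into one kernel-verified Lean document; each statement's English description precedes it below -/
import Mathlib

section
/- Let X ⊆ ℝⁿ be a Borel set, (D, 𝒟, P_d) a probability space, and f : ℝⁿ × D → ℝⁿ a map such that d ↦ f(x,d) is measurable for each fixed x ∈ X. Let h : ℝⁿ → ℝ be Borel measurable and λ ∈ [0,1]. Suppose: (i) h(x) ≥ 0 for all x ∈ X; (ii) h(x) ≥ 1 for all x ∈ ℝⁿ \ X; (iii) for every x ∈ X the function d ↦ h(f(x,d)) is P_d-integrable and ∫ h(f(x,d)) dP_d(d) − h(x) ≤ λ. Then for every x ∈ X, P_d{d ∈ D : f(x,d) ∈ X} ≥ 1 − λ − h(x). -/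
/-! A barrier `g` with `g ≥ 0` on `A` and `g ≥ 1` off `A` dominates the indicator of `Aᶜ`, so
Markov's inequality bounds the probability of leaving `A` by `𝔼 g`. For an SBC, `g = h ∘ f x` and
condition (iii) gives `𝔼 g ≤ λ + h x`. -/

open MeasureTheory

namespace MeasureTheory

variable {α : Type*} [MeasurableSpace α] {μ : Measure α} {A : Set α} {g : α → ℝ}

theorem measureReal_compl_le_integral [IsFiniteMeasure μ] (hg : Integrable g μ)
    (hg_mem : ∀ a ∈ A, 0 ≤ g a) (hg_notMem : ∀ a ∉ A, 1 ≤ g a) :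
    μ.real Aᶜ ≤ ∫ a, g a ∂μ := by
  have hg_nonneg : 0 ≤ g := fun a ↦ by
    by_cases ha : a ∈ A
    · exact hg_mem a ha
    · exact zero_le_one.trans (hg_notMem a ha)
  calc μ.real Aᶜ ≤ μ.real {a | 1 ≤ g a} := measureReal_mono fun a ha ↦ hg_notMem a ha
    _ = 1 * μ.real {a | 1 ≤ g a} := (one_mul _).symm
    _ ≤ ∫ a, g a ∂μ := mul_meas_ge_le_integral_of_nonneg (.of_forall hg_nonneg) hg 1

theorem ofReal_one_sub_integral_le_measure [IsProbabilityMeasure μ] (hg : Integrable g μ)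
    (hg_mem : ∀ a ∈ A, 0 ≤ g a) (hg_notMem : ∀ a ∉ A, 1 ≤ g a) :
    ENNReal.ofReal (1 - ∫ a, g a ∂μ) ≤ μ A := by
  have hcompl := measureReal_compl_le_integral hg hg_mem hg_notMem
  calc ENNReal.ofReal (1 - ∫ a, g a ∂μ) ≤ ENNReal.ofReal (1 - μ.real Aᶜ) :=
        ENNReal.ofReal_le_ofReal (by linarith)
    _ = 1 - μ Aᶜ := by
        rw [ENNReal.ofReal_sub _ measureReal_nonneg, ENNReal.ofReal_one, ofReal_measureReal]
    _ ≤ μ A := tsub_le_iff_right.2 (measure_univ (μ := μ) ▸ measure_univ_le_add_compl A)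

end MeasureTheory

theorem sbc_one_step_safety_prob_general {n : ℕ} {D : Type*} [MeasurableSpace D]
    (Pd : Measure D) [IsProbabilityMeasure Pd]
    (X : Set (Fin n → ℝ))
    (f : (Fin n → ℝ) → D → (Fin n → ℝ))
    (h : (Fin n → ℝ) → ℝ)
    (lam : ℝ)
    (h1 : ∀ x ∈ X, 0 ≤ h x)
    (h2 : ∀ x, x ∉ X → 1 ≤ h x)
    (h3 : ∀ x ∈ X, Integrable (fun d => h (f x d)) Pd ∧
      (∫ d, h (f x d) ∂Pd) - h x ≤ lam) :
    ∀ x ∈ X, Pd {d | f x d ∈ X} ≥ ENNReal.ofReal (1 - lam - h x) := by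
  intro x hx
  obtain ⟨hint, hdrift⟩ := h3 x hx
  calc ENNReal.ofReal (1 - lam - h x) ≤ ENNReal.ofReal (1 - ∫ d, h (f x d) ∂Pd) :=
        ENNReal.ofReal_le_ofReal (by linarith)
    _ ≤ Pd {d | f x d ∈ X} :=
        ofReal_one_sub_integral_le_measure hint (fun d hd ↦ h1 _ hd) (fun d hd ↦ h2 _ hd)

/-- A stochastic barrier certificate (SBC) yields a one-step safety probability bound:
if `h ≥ 0` on the safe set `X`, `h ≥ 1` outside `X`, and the expected value of `h`
after one step exceeds `h x` by at most `lam`, then for every `x ∈ X` the probability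
that the successor `f x d` stays in `X` is at least `1 - lam - h x`. -/
theorem sbc_one_step_safety_prob {n : ℕ} {D : Type*} [MeasurableSpace D]
    (Pd : Measure D) [IsProbabilityMeasure Pd]
    (X : Set (Fin n → ℝ)) (hX : MeasurableSet X)
    (f : (Fin n → ℝ) → D → (Fin n → ℝ))
    (hf : ∀ x ∈ X, Measurable (fun d => f x d))
    (h : (Fin n → ℝ) → ℝ) (hh : Measurable h)
    (lam : ℝ) (hlam : lam ∈ Set.Icc (0 : ℝ) 1)
    (h1 : ∀ x ∈ X, 0 ≤ h x)
    (h2 : ∀ x, x ∉ X → 1 ≤ h x)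
    (h3 : ∀ x ∈ X, Integrable (fun d => h (f x d)) Pd ∧
      (∫ d, h (f x d) ∂Pd) - h x ≤ lam) :
    ∀ x ∈ X, Pd {d | f x d ∈ X} ≥ ENNReal.ofReal (1 - lam - h x) :=
  sbc_one_step_safety_prob_general Pd X f h lam h1 h2 h3
end

section
/- Let X ⊆ ℝⁿ be a Borel set, P_x a probability measure on X, (D, 𝒟, P_d) a probability space, and f : X × D → ℝⁿ measurable with respect to the product σ-algebra. Let γ ∈ (0,1), α₁, α₂ ∈ (0,1), and let h : ℝⁿ → ℝ be Borel measurable with h(y) ≥ 0 for all y ∈ X and h(y) < 0 for all y ∈ ℝⁿ \ X. If (P_x ⊗ P_d){(x,d) : h(f(x,d)) < γ·h(x)} ≤ α₁·α₂, then P_x{x ∈ X : P_d({d ∈ D : f(x,d) ∈ X}) ≥ 1 − α₂} ≥ 1 − α₁. -/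
open MeasureTheory ENNReal

/- Markov's inequality applied to the section measures `x ↦ ν Sₓ`, whose integral is
`(μ.prod ν) S`, bounds the states whose violation probability reaches `α₂` by `α₁`; on
the remaining states the barrier condition holds with probability above `1 - α₂`, and
wherever it holds the successor stays in `X`. -/

theorem mem_of_mul_barrier_le {E : Type*} {X : Set E} {h : E → ℝ}
    (hneg : ∀ y, y ∉ X → h y < 0) {γ : ℝ} (hγ : 0 ≤ γ) {x y : E}
    (hx : 0 ≤ h x) (hy : γ * h x ≤ h y) : y ∈ X := by
  by_contra hyX
  nlinarith [hneg y hyX, mul_nonneg hγ hx]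

section ProdSections

variable {α β : Type*} [MeasurableSpace α] [MeasurableSpace β] {μ : Measure α} {ν : Measure β}
  {S : Set (α × β)} {a b : ℝ≥0∞}

theorem measure_setOf_le_measure_prodMk_preimage_le [SFinite ν] (hS : MeasurableSet S)
    (hb₀ : b ≠ 0) (hb : b ≠ ∞) (hSab : μ.prod ν S ≤ a * b) :
    μ {x | b ≤ ν (Prod.mk x ⁻¹' S)} ≤ a :=
  calc μ {x | b ≤ ν (Prod.mk x ⁻¹' S)}
      ≤ (∫⁻ x, ν (Prod.mk x ⁻¹' S) ∂μ) / b :=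
        meas_ge_le_lintegral_div (measurable_measure_prodMk_left hS).aemeasurable hb₀ hb
    _ = μ.prod ν S / b := by rw [Measure.prod_apply hS]
    _ ≤ a * b / b := by gcongr
    _ = a := ENNReal.mul_div_cancel_right hb₀ hb

theorem one_sub_le_measure_setOf_one_sub_le_measure_prodMk_preimage_compl
    [IsProbabilityMeasure μ] [IsProbabilityMeasure ν] (hS : MeasurableSet S)
    (hb₀ : b ≠ 0) (hb : b ≠ ∞) (hSab : μ.prod ν S ≤ a * b) :
    1 - a ≤ μ {x | 1 - b ≤ ν (Prod.mk x ⁻¹' S)ᶜ} := by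
  have hbad : MeasurableSet {x | b ≤ ν (Prod.mk x ⁻¹' S)} :=
    measurable_measure_prodMk_left hS measurableSet_Ici
  calc 1 - a
      ≤ 1 - μ {x | b ≤ ν (Prod.mk x ⁻¹' S)} :=
        tsub_le_tsub_left (measure_setOf_le_measure_prodMk_preimage_le hS hb₀ hb hSab) 1
    _ = μ {x | b ≤ ν (Prod.mk x ⁻¹' S)}ᶜ := (prob_compl_eq_one_sub hbad).symm
    _ ≤ μ {x | 1 - b ≤ ν (Prod.mk x ⁻¹' S)ᶜ} := by
        refine measure_mono fun x (hx : ¬b ≤ ν (Prod.mk x ⁻¹' S)) => ?_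
        rw [Set.mem_ofPred_eq, prob_compl_eq_one_sub (measurable_prodMk_left hS)]
        exact tsub_le_tsub_left (not_le.1 hx).le 1

end ProdSections

theorem pac_one_step_safety_I_general {n : ℕ} {D : Type*} [MeasurableSpace D]
    (X : Set (Fin n → ℝ))
    (Px : Measure ↥X) (Pd : Measure D)
    [IsProbabilityMeasure Px] [IsProbabilityMeasure Pd]
    (f : ↥X × D → (Fin n → ℝ)) (hf : Measurable f)
    (γ : ℝ) (hγ : γ ∈ Set.Ioo (0 : ℝ) 1)
    (α₁ α₂ : ℝ) (hα₁ : α₁ ∈ Set.Ioo (0 : ℝ) 1) (hα₂ : α₂ ∈ Set.Ioo (0 : ℝ) 1)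
    (h : (Fin n → ℝ) → ℝ) (hh : Measurable h)
    (hpos : ∀ y ∈ X, 0 ≤ h y) (hneg : ∀ y, y ∉ X → h y < 0)
    (hjoint : (Px.prod Pd) {p : ↥X × D | h (f p) < γ * h ↑p.1} ≤ ENNReal.ofReal (α₁ * α₂)) :
    Px {x : ↥X | Pd {d | f (x, d) ∈ X} ≥ ENNReal.ofReal (1 - α₂)} ≥
      ENNReal.ofReal (1 - α₁) := by
  have hS : MeasurableSet {p : ↥X × D | h (f p) < γ * h ↑p.1} :=
    measurableSet_lt (hh.comp hf) (measurable_const.mul (hh.comp (measurable_subtype_coe.comp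
      measurable_fst)))
  rw [ENNReal.ofReal_mul hα₁.1.le] at hjoint
  have hsafe := one_sub_le_measure_setOf_one_sub_le_measure_prodMk_preimage_compl hS
    (ENNReal.ofReal_pos.2 hα₂.1).ne' ofReal_ne_top hjoint
  rw [ge_iff_le, ENNReal.ofReal_sub _ hα₁.1.le, ENNReal.ofReal_one]
  refine hsafe.trans (measure_mono fun x hx => ?_)
  rw [Set.mem_ofPred_eq, ENNReal.ofReal_sub _ hα₂.1.le, ENNReal.ofReal_one]
  refine hx.trans (measure_mono fun d hd => ?_)
  exact mem_of_mul_barrier_le hneg hγ.1.le (hpos _ x.2) (not_lt.1 hd)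

/-- PAC safety certification I (barrier form): if the joint probability that the
barrier decrease condition `h (f (x,d)) ≥ γ · h x` is violated is at most `α₁·α₂`,
then for at least a `1 − α₁` fraction of states `x ∈ X` the one-step safety
probability `P_d [f (x,d) ∈ X]` is at least `1 − α₂`. -/
theorem pac_one_step_safety_I {n : ℕ} {D : Type*} [MeasurableSpace D]
    (X : Set (Fin n → ℝ)) (hX : MeasurableSet X)
    (Px : Measure ↥X) (Pd : Measure D)
    [IsProbabilityMeasure Px] [IsProbabilityMeasure Pd]
    (f : ↥X × D → (Fin n → ℝ)) (hf : Measurable f)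
    (γ : ℝ) (hγ : γ ∈ Set.Ioo (0 : ℝ) 1)
    (α₁ α₂ : ℝ) (hα₁ : α₁ ∈ Set.Ioo (0 : ℝ) 1) (hα₂ : α₂ ∈ Set.Ioo (0 : ℝ) 1)
    (h : (Fin n → ℝ) → ℝ) (hh : Measurable h)
    (hpos : ∀ y ∈ X, 0 ≤ h y) (hneg : ∀ y, y ∉ X → h y < 0)
    (hjoint : (Px.prod Pd) {p : ↥X × D | h (f p) < γ * h ↑p.1} ≤ ENNReal.ofReal (α₁ * α₂)) :
    Px {x : ↥X | Pd {d | f (x, d) ∈ X} ≥ ENNReal.ofReal (1 - α₂)} ≥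
      ENNReal.ofReal (1 - α₁) :=
  pac_one_step_safety_I_general X Px Pd f hf γ hγ α₁ α₂ hα₁ hα₂ h hh hpos hneg hjoint
end

section
/- Let (D, 𝒟, P_d) be a probability space, B ⊆ D measurable, and μ = P_d(B). Let M ≥ 1 be an integer and α₂, l, δ₂ ∈ (0,1) with M ≥ (1/(2·α₂²))·ln(1/((1−l)·δ₂)). If P_d^M{(d₁,…,d_M) ∈ D^M : d_j ∉ B for all j = 1,…,M} ≥ 1 − l·δ₂, then μ < α₂. -/
/-!
No sample lands in `B` with probability exactly `(1 - μ) ^ M`. If `μ ≥ α₂`, then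
`(1 - μ) ^ M ≤ (1 - α₂) ^ M ≤ exp (-2 M α₂²) ≤ (1 - l) δ₂` (the Bernoulli case of Hoeffding's bound,
then the sample bound on `M`), which contradicts `1 - l δ₂ ≤ (1 - μ) ^ M` since `δ₂ < 1`.
-/

open MeasureTheory Real

theorem antitone_one_sub_mul_exp_two_mul_sq :
    Antitone fun x : ℝ => (1 - x) * exp (2 * x ^ 2) := by
  have hderiv : ∀ x : ℝ, HasDerivAt (fun x : ℝ => (1 - x) * exp (2 * x ^ 2))
      (-(exp (2 * x ^ 2) * (2 * x - 1) ^ 2)) x := by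
    intro x
    have h := ((hasDerivAt_id' x).const_sub 1).fun_mul (((hasDerivAt_pow 2 x).const_mul 2).exp)
    refine h.congr_deriv ?_
    norm_num
    ring
  refine antitone_of_deriv_nonpos (fun x => (hderiv x).differentiableAt) fun x => ?_
  rw [(hderiv x).deriv]
  have := exp_pos (2 * x ^ 2)
  nlinarith [sq_nonneg (2 * x - 1)]

theorem one_sub_le_exp_neg_two_mul_sq {x : ℝ} (hx : 0 ≤ x) :
    1 - x ≤ exp (-(2 * x ^ 2)) := by
  have h : (1 - x) * exp (2 * x ^ 2) ≤ 1 := by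
    simpa using antitone_one_sub_mul_exp_two_mul_sq hx
  rw [exp_neg, ← one_div, le_div_iff₀ (exp_pos _)]
  exact h

theorem exp_neg_two_mul_sq_mul_le_of_ge {a c M : ℝ} (ha : 0 < a) (hc : 0 < c)
    (hM : M ≥ 1 / (2 * a ^ 2) * log (1 / c)) : exp (-(2 * a ^ 2 * M)) ≤ c := by
  have hlog : -log c ≤ 2 * a ^ 2 * M := by
    rwa [ge_iff_le, one_div_mul_eq_div, div_le_iff₀' (by positivity), one_div, log_inv] at hM
  calc exp (-(2 * a ^ 2 * M)) ≤ exp (log c) := exp_le_exp.mpr (by linarith)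
    _ = c := exp_log hc

namespace MeasureTheory.Measure

variable {ι D : Type*} [Fintype ι] [MeasurableSpace D]

theorem pi_setOf_forall_notMem (P : Measure D) [SigmaFinite P] (B : Set D) :
    Measure.pi (fun _ : ι => P) {d | ∀ i, d i ∉ B} = P Bᶜ ^ Fintype.card ι := by
  have hbox : {d : ι → D | ∀ i, d i ∉ B} = Set.univ.pi fun _ => Bᶜ := by ext; simp
  rw [hbox, pi_pi, Finset.prod_const, Finset.card_univ]

theorem toReal_pi_setOf_forall_notMem (P : Measure D) [IsProbabilityMeasure P] {B : Set D}
    (hB : MeasurableSet B) :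
    (Measure.pi (fun _ : ι => P) {d | ∀ i, d i ∉ B}).toReal
      = (1 - (P B).toReal) ^ Fintype.card ι := by
  rw [pi_setOf_forall_notMem, ENNReal.toReal_pow, prob_compl_eq_one_sub hB,
    ENNReal.toReal_sub_of_le prob_le_one ENNReal.one_ne_top, ENNReal.toReal_one]

theorem toReal_pi_setOf_forall_notMem_le_exp (P : Measure D) [IsProbabilityMeasure P]
    {B : Set D} (hB : MeasurableSet B) {α : ℝ} (hα : 0 ≤ α) (hαB : α ≤ (P B).toReal) :
    (Measure.pi (fun _ : ι => P) {d | ∀ i, d i ∉ B}).toReal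
      ≤ exp (-(2 * α ^ 2 * Fintype.card ι)) := by
  have hPB : (P B).toReal ≤ 1 := measureReal_le_one
  rw [toReal_pi_setOf_forall_notMem P hB, mul_comm, neg_mul_eq_mul_neg, exp_nat_mul]
  exact pow_le_pow_left₀ (by linarith) ((sub_le_sub_left hαB 1).trans
    (one_sub_le_exp_neg_two_mul_sq hα)) _

end MeasureTheory.Measure

theorem hoeffding_empirical_zero_general {D : Type*} [MeasurableSpace D]
    (Pd : Measure D) [IsProbabilityMeasure Pd]
    (B : Set D) (hB : MeasurableSet B)
    (M : ℕ)
    (α₂ l δ₂ : ℝ) (hα₂ : α₂ ∈ Set.Ioo (0 : ℝ) 1) (hl : l ∈ Set.Ioo (0 : ℝ) 1)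
    (hδ₂ : δ₂ ∈ Set.Ioo (0 : ℝ) 1)
    (hMbound : (M : ℝ) ≥ (1 / (2 * α₂ ^ 2)) * Real.log (1 / ((1 - l) * δ₂)))
    (hemp : (Measure.pi fun _ : Fin M => Pd) {d : Fin M → D | ∀ j, d j ∉ B} ≥
      ENNReal.ofReal (1 - l * δ₂)) :
    (Pd B).toReal < α₂ := by
  obtain ⟨hα₂0, -⟩ := hα₂
  obtain ⟨-, hl1⟩ := hl
  obtain ⟨hδ₂0, hδ₂1⟩ := hδ₂
  by_contra! hα₂B
  have hlower : 1 - l * δ₂ ≤ ((Measure.pi fun _ : Fin M => Pd) {d | ∀ j, d j ∉ B}).toReal :=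
    (ENNReal.ofReal_le_iff_le_toReal (measure_ne_top _ _)).mp hemp
  have hupper := Measure.toReal_pi_setOf_forall_notMem_le_exp (ι := Fin M) Pd hB hα₂0.le hα₂B
  rw [Fintype.card_fin] at hupper
  have hsample := exp_neg_two_mul_sq_mul_le_of_ge hα₂0 (mul_pos (by linarith) hδ₂0) hMbound
  linarith

/-- Hoeffding + positive-intersection argument: if with probability at least
`1 − l·δ₂` none of `M` i.i.d. draws lands in `B`, where `M` meets the
Hoeffding sample bound, then `P_d(B) < α₂`. -/
theorem hoeffding_empirical_zero {D : Type*} [MeasurableSpace D]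
    (Pd : Measure D) [IsProbabilityMeasure Pd]
    (B : Set D) (hB : MeasurableSet B)
    (M : ℕ) (hM : 1 ≤ M)
    (α₂ l δ₂ : ℝ) (hα₂ : α₂ ∈ Set.Ioo (0 : ℝ) 1) (hl : l ∈ Set.Ioo (0 : ℝ) 1)
    (hδ₂ : δ₂ ∈ Set.Ioo (0 : ℝ) 1)
    (hMbound : (M : ℝ) ≥ (1 / (2 * α₂ ^ 2)) * Real.log (1 / ((1 - l) * δ₂)))
    (hemp : (Measure.pi fun _ : Fin M => Pd) {d : Fin M → D | ∀ j, d j ∉ B} ≥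
      ENNReal.ofReal (1 - l * δ₂)) :
    (Pd B).toReal < α₂ :=
  hoeffding_empirical_zero_general Pd B hB M α₂ l δ₂ hα₂ hl hδ₂ hMbound hemp
end

section
/- Let (D, 𝒟, P_d) be a probability space and g : D → ℝ measurable with 0 ≤ g(d) ≤ U for all d ∈ D, where U > 0. Let μ = ∫ g dP_d, c ∈ ℝ, τ > 0, l, δ₂ ∈ (0,1), and let M ≥ 1 be an integer with M ≥ (U²/(2·τ²))·ln(1/((1−l)·δ₂)). If P_d^M{(d₁,…,d_M) ∈ D^M : (1/M)·Σ_{j=1}^M g(d_j) ≤ c − τ} ≥ 1 − l·δ₂, then μ ≤ c. -/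
/-!
Suppose `μ > c`. Then the event `(1/M) ∑ g(d_j) ≤ c - τ` lies inside the lower-tail event
`(1/M) ∑ g(d_j) ≤ μ - τ`, whose probability Hoeffding's inequality bounds by
`exp (-2 M τ² / U²) ≤ (1 - l) δ₂`. The event would then have probability both `≥ 1 - l δ₂` and
`≤ δ₂ - l δ₂`, forcing `δ₂ ≥ 1`.
-/

open MeasureTheory ProbabilityTheory Real

lemma ProbabilityTheory.HasSubgaussianMGF.pi_eval {ι Ω : Type*} [Fintype ι]
    [MeasurableSpace Ω] {P : Measure Ω} [IsProbabilityMeasure P] {X : Ω → ℝ} {c : NNReal}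
    (hX : HasSubgaussianMGF X c P) (j : ι) :
    HasSubgaussianMGF (fun ω : ι → Ω => X (ω j)) c (Measure.pi fun _ => P) :=
  HasSubgaussianMGF.of_map (measurable_pi_apply j).aemeasurable
    (by rwa [(measurePreserving_eval (fun _ => P) j).map_eq])

/-- Hoeffding's inequality for the lower tail of an i.i.d. sample of a bounded variable. -/
theorem measureReal_sum_le_mul_integral_sub_le {ι Ω : Type*} [Fintype ι] [MeasurableSpace Ω]
    {P : Measure Ω} [IsProbabilityMeasure P] {g : Ω → ℝ} (hg : AEMeasurable g P) {a b : ℝ}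
    (hgab : ∀ᵐ x ∂P, g x ∈ Set.Icc a b) {τ : ℝ} (hτ : 0 ≤ τ) :
    (Measure.pi fun _ : ι => P).real
        {ω | ∑ j, g (ω j) ≤ Fintype.card ι * (P[g] - τ)} ≤
      exp (-2 * Fintype.card ι * τ ^ 2 / (b - a) ^ 2) := by
  have hsubG : ∀ j ∈ Finset.univ, HasSubgaussianMGF (fun ω : ι → Ω => P[g] - g (ω j))
      ((‖b - a‖₊ / 2) ^ 2) (Measure.pi fun _ => P) := fun j _ => by
    simpa using (hasSubgaussianMGF_of_mem_Icc hg hgab).neg.pi_eval j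
  have hindep : iIndepFun (fun j (ω : ι → Ω) => P[g] - g (ω j)) (Measure.pi fun _ => P) :=
    iIndepFun_pi (X := fun _ x => P[g] - g x) fun _ => hg.const_sub _
  have hset : {ω : ι → Ω | ∑ j, g (ω j) ≤ Fintype.card ι * (P[g] - τ)} =
      {ω | Fintype.card ι * τ ≤ ∑ j, (P[g] - g (ω j))} := by
    ext ω
    simp only [Set.mem_ofPred_eq, Finset.sum_sub_distrib, Finset.sum_const, Finset.card_univ,
      nsmul_eq_mul]
    constructor <;> intro h <;> linarith
  have hexp : -(Fintype.card ι * τ) ^ 2 / (2 * ((∑ _j : ι, (‖b - a‖₊ / 2) ^ 2 : NNReal) : ℝ)) =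
      -2 * Fintype.card ι * τ ^ 2 / (b - a) ^ 2 := by
    simp only [Finset.sum_const, Finset.card_univ, nsmul_eq_mul]
    push_cast
    rw [Real.norm_eq_abs, div_pow, sq_abs]
    rcases eq_or_ne (Fintype.card ι : ℝ) 0 with hn | hn
    · simp [hn]
    rcases eq_or_ne ((b - a) ^ 2) 0 with hab | hab
    · simp [hab]
    field_simp
  rw [hset, ← hexp]
  exact HasSubgaussianMGF.measure_sum_ge_le_of_iIndepFun hindep hsubG (by positivity)

theorem Real.exp_neg_two_mul_mul_sq_div_sq_le {M U τ p : ℝ} (hp : 0 < p) (hU : U ≠ 0)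
    (hτ : τ ≠ 0) (hM : U ^ 2 / (2 * τ ^ 2) * log (1 / p) ≤ M) :
    exp (-2 * M * τ ^ 2 / U ^ 2) ≤ p := by
  have hlog : -log p ≤ 2 * τ ^ 2 / U ^ 2 * M := by
    rw [one_div, log_inv] at hM
    calc -log p = 2 * τ ^ 2 / U ^ 2 * (U ^ 2 / (2 * τ ^ 2) * -log p) := by field_simp
      _ ≤ 2 * τ ^ 2 / U ^ 2 * M := by gcongr
  rw [← exp_log hp, exp_le_exp]
  linarith [show -2 * M * τ ^ 2 / U ^ 2 = -(2 * τ ^ 2 / U ^ 2 * M) by ring]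

/-- Hoeffding + positive-intersection argument for bounded means: if with probability
at least `1 − l·δ₂` the empirical mean of `M` i.i.d. draws of `g` (bounded in `[0,U]`)
is at most `c − τ`, where `M` meets the Hoeffding sample bound, then the true mean
`μ = ∫ g dP_d` satisfies `μ ≤ c`. -/
theorem hoeffding_empirical_mean {D : Type*} [MeasurableSpace D]
    (Pd : Measure D) [IsProbabilityMeasure Pd]
    (g : D → ℝ) (hg : Measurable g)
    (U : ℝ) (hU : 0 < U) (hgbdd : ∀ d, 0 ≤ g d ∧ g d ≤ U)
    (c τ : ℝ) (hτ : 0 < τ)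
    (l δ₂ : ℝ) (hl : l ∈ Set.Ioo (0 : ℝ) 1) (hδ₂ : δ₂ ∈ Set.Ioo (0 : ℝ) 1)
    (M : ℕ) (hM : 1 ≤ M)
    (hMbound : (M : ℝ) ≥ (U ^ 2 / (2 * τ ^ 2)) * Real.log (1 / ((1 - l) * δ₂)))
    (hemp : (Measure.pi fun _ : Fin M => Pd)
        {d : Fin M → D | (1 / (M : ℝ)) * ∑ j, g (d j) ≤ c - τ} ≥
      ENNReal.ofReal (1 - l * δ₂)) :
    (∫ d, g d ∂Pd) ≤ c := by
  by_contra! hμc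
  have hM0 : (0 : ℝ) < M := by exact_mod_cast hM
  have hp : 0 < (1 - l) * δ₂ := mul_pos (sub_pos.2 hl.2) hδ₂.1
  have hevent : {d : Fin M → D | (1 / (M : ℝ)) * ∑ j, g (d j) ≤ c - τ} ⊆
      {d | ∑ j, g (d j) ≤ Fintype.card (Fin M) * (Pd[g] - τ)} := by
    intro d hd
    simp only [Set.mem_ofPred_eq, Fintype.card_fin, one_div, inv_mul_le_iff₀ hM0] at hd ⊢
    exact hd.trans (by gcongr)
  have htail : (Measure.pi fun _ : Fin M => Pd).real
      {d | (1 / (M : ℝ)) * ∑ j, g (d j) ≤ c - τ} ≤ (1 - l) * δ₂ :=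
    calc _ ≤ (Measure.pi fun _ : Fin M => Pd).real
          {d | ∑ j, g (d j) ≤ Fintype.card (Fin M) * (Pd[g] - τ)} := measureReal_mono hevent
      _ ≤ exp (-2 * Fintype.card (Fin M) * τ ^ 2 / (U - 0) ^ 2) :=
          measureReal_sum_le_mul_integral_sub_le hg.aemeasurable (ae_of_all _ hgbdd) hτ.le
      _ ≤ (1 - l) * δ₂ := by
          rw [Fintype.card_fin, sub_zero]
          exact exp_neg_two_mul_mul_sq_div_sq_le hp hU.ne' hτ.ne' hMbound
  have hprob : ENNReal.ofReal (1 - l * δ₂) ≤ ENNReal.ofReal ((1 - l) * δ₂) := by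
    rw [ge_iff_le, ← ofReal_measureReal] at hemp
    exact hemp.trans (ENNReal.ofReal_le_ofReal htail)
  rw [ENNReal.ofReal_le_ofReal_iff hp.le] at hprob
  linarith [hδ₂.2]
end

section
/- Let (X, 𝒳, P_x) and (D, 𝒟, P_d) be probability spaces and let V ⊆ X × D be measurable with respect to the product σ-algebra. Let M ≥ 1 be an integer and α₁, α₂, l, δ₂ ∈ (0,1) with α₁ < l·δ₂ and M ≥ (1/(2·α₂²))·ln(1/((1−l)·δ₂)). If (P_x ⊗ P_d^M){(x, d₁,…,d_M) : (x, d_j) ∈ V for some j ∈ {1,…,M}} ≤ α₁, then P_x{x ∈ X : P_d({d ∈ D : (x,d) ∈ V}) ≤ α₂} ≥ 1 − α₁/(l·δ₂). -/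
open MeasureTheory

/-!
If the slice `V_x` has `P_d`-mass above `α₂`, all `M` draws miss it with probability
`(1 - P_d V_x)^M ≤ (1 - α₂)^M ≤ exp(-2 α₂² M) ≤ (1 - l) δ₂`, so some draw hits it with probability
at least `l δ₂`. The joint probability is the `P_x`-integral of this hitting probability, so
Markov's inequality bounds the `P_x`-mass of such states by `α₁ / (l δ₂)`.
-/

namespace Real

theorem antitone_one_sub_mul_exp_two_mul_sq : Antitone fun y : ℝ => (1 - y) * exp (2 * y ^ 2) := by
  have hderiv : ∀ y : ℝ, HasDerivAt (fun y : ℝ => (1 - y) * exp (2 * y ^ 2))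
      (-((2 * y - 1) ^ 2 * exp (2 * y ^ 2))) y := by
    intro y
    refine (((hasDerivAt_id y).const_sub 1).mul
      (((hasDerivAt_pow 2 y).const_mul 2).exp)).congr_deriv ?_
    simp only [id, Nat.cast_ofNat]
    ring
  refine antitone_of_deriv_nonpos (fun y => (hderiv y).differentiableAt) fun y => ?_
  rw [(hderiv y).deriv, neg_nonpos]
  positivity

theorem one_sub_le_exp_neg_two_mul_sq {x : ℝ} (hx : 0 ≤ x) : 1 - x ≤ exp (-2 * x ^ 2) := by
  have h : (1 - x) * exp (2 * x ^ 2) ≤ 1 := by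
    simpa using antitone_one_sub_mul_exp_two_mul_sq hx
  rwa [neg_mul, exp_neg, ← one_div, le_div_iff₀ (exp_pos _)]

theorem one_sub_pow_le_of_log_inv_le {x c : ℝ} {M : ℕ} (hx0 : 0 < x) (hx1 : x ≤ 1) (hc : 0 < c)
    (hM : 1 / (2 * x ^ 2) * log (1 / c) ≤ M) : (1 - x) ^ M ≤ c := by
  have hlog : -log c ≤ 2 * x ^ 2 * M := by
    rwa [one_div_mul_eq_div, div_le_iff₀' (by positivity), one_div, log_inv] at hM
  calc (1 - x) ^ M ≤ exp (-2 * x ^ 2) ^ M :=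
        pow_le_pow_left₀ (by linarith) (one_sub_le_exp_neg_two_mul_sq hx0.le) M
    _ = exp (-(2 * x ^ 2 * M)) := by rw [← exp_nat_mul]; ring_nf
    _ ≤ exp (log c) := exp_le_exp.mpr (by linarith)
    _ = c := exp_log hc

end Real

theorem measure_pi_exists_mem {ι D : Type*} [Fintype ι] [MeasurableSpace D] (μ : Measure D)
    [IsProbabilityMeasure μ] {S : Set D} (hS : MeasurableSet S) :
    Measure.pi (fun _ : ι => μ) {d | ∃ j, d j ∈ S} = 1 - (1 - μ S) ^ Fintype.card ι := by
  have hcompl : {d : ι → D | ∃ j, d j ∈ S} = (Set.univ.pi fun _ => Sᶜ)ᶜ := by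
    ext d; simp
  rw [hcompl, prob_compl_eq_one_sub (.univ_pi fun _ => hS.compl), Measure.pi_pi,
    Finset.prod_const, Finset.card_univ, prob_compl_eq_one_sub hS]

theorem prod_pi_exists_slice_eq_lintegral {X D ι : Type*} [MeasurableSpace X] [MeasurableSpace D]
    [Fintype ι] (Px : Measure X) (Pd : Measure D) [IsProbabilityMeasure Pd]
    {V : Set (X × D)} (hV : MeasurableSet V) :
    (Px.prod (Measure.pi fun _ : ι => Pd)) {p : X × (ι → D) | ∃ j, (p.1, p.2 j) ∈ V} =
      ∫⁻ x, 1 - (1 - Pd {d | (x, d) ∈ V}) ^ Fintype.card ι ∂Px := by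
  have hE : MeasurableSet {p : X × (ι → D) | ∃ j, (p.1, p.2 j) ∈ V} := by
    measurability
  rw [Measure.prod_apply hE]
  exact lintegral_congr fun x => measure_pi_exists_mem Pd (measurable_prodMk_left hV)

theorem ENNReal.ofReal_one_sub_one_sub_pow_le {a : ℝ} {p : ENNReal} (ha0 : 0 ≤ a) (ha1 : a ≤ 1)
    (hp : ENNReal.ofReal a ≤ p) (M : ℕ) :
    ENNReal.ofReal (1 - (1 - a) ^ M) ≤ 1 - (1 - p) ^ M := by
  have h : (1 - p) ^ M ≤ ENNReal.ofReal ((1 - a) ^ M) := by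
    rw [ENNReal.ofReal_pow (by linarith), ENNReal.ofReal_sub _ ha0, ENNReal.ofReal_one]
    gcongr
  rw [ENNReal.ofReal_sub _ (by positivity), ENNReal.ofReal_one]
  exact tsub_le_tsub_left h 1

theorem ofReal_one_sub_div_le_measure_of_mul_measure_compl_le {X : Type*} [MeasurableSpace X]
    {μ : Measure X} [IsProbabilityMeasure μ] {s : Set X} (hs : MeasurableSet s) {a c : ℝ}
    (ha : 0 ≤ a) (hc : 0 < c) (h : ENNReal.ofReal c * μ sᶜ ≤ ENNReal.ofReal a) :
    ENNReal.ofReal (1 - a / c) ≤ μ s := by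
  have hcompl : μ sᶜ ≤ ENNReal.ofReal (a / c) := by
    rw [ENNReal.ofReal_div_of_pos hc, ENNReal.le_div_iff_mul_le (by simp [hc]) (by simp),
      mul_comm]
    exact h
  rw [prob_compl_eq_one_sub hs] at hcompl
  rw [ENNReal.ofReal_sub _ (by positivity), ENNReal.ofReal_one]
  exact tsub_le_iff_tsub_le.mp hcompl

theorem pac_one_to_many_slice_bound_general {X D : Type*} [MeasurableSpace X] [MeasurableSpace D]
    (Px : Measure X) (Pd : Measure D)
    [IsProbabilityMeasure Px] [IsProbabilityMeasure Pd]
    (V : Set (X × D)) (hV : MeasurableSet V)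
    (M : ℕ)
    (α₁ α₂ l δ₂ : ℝ)
    (hα₁ : α₁ ∈ Set.Ioo (0 : ℝ) 1) (hα₂ : α₂ ∈ Set.Ioo (0 : ℝ) 1)
    (hl : l ∈ Set.Ioo (0 : ℝ) 1) (hδ₂ : δ₂ ∈ Set.Ioo (0 : ℝ) 1)
    (hMbound : (M : ℝ) ≥ (1 / (2 * α₂ ^ 2)) * Real.log (1 / ((1 - l) * δ₂)))
    (hjoint : (Px.prod (Measure.pi fun _ : Fin M => Pd))
        {p : X × (Fin M → D) | ∃ j, (p.1, p.2 j) ∈ V} ≤ ENNReal.ofReal α₁) :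
    Px {x | Pd {d | (x, d) ∈ V} ≤ ENNReal.ofReal α₂} ≥
      ENNReal.ofReal (1 - α₁ / (l * δ₂)) := by
  obtain ⟨hα₁0, -⟩ := hα₁
  obtain ⟨hα₂0, hα₂1⟩ := hα₂
  obtain ⟨hl0, hl1⟩ := hl
  obtain ⟨hδ₂0, hδ₂1⟩ := hδ₂
  have hmiss : (1 - α₂) ^ M ≤ (1 - l) * δ₂ :=
    Real.one_sub_pow_le_of_log_inv_le hα₂0 hα₂1.le (mul_pos (by linarith) hδ₂0) hMbound
  have hp : Measurable fun x => Pd {d | (x, d) ∈ V} := measurable_measure_prodMk_left hV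
  have hhit : ∀ x, ENNReal.ofReal α₂ < Pd {d | (x, d) ∈ V} →
      ENNReal.ofReal (l * δ₂) ≤ 1 - (1 - Pd {d | (x, d) ∈ V}) ^ M := fun x hx =>
    calc ENNReal.ofReal (l * δ₂) ≤ ENNReal.ofReal (1 - (1 - α₂) ^ M) :=
          ENNReal.ofReal_le_ofReal (by nlinarith)
      _ ≤ 1 - (1 - Pd {d | (x, d) ∈ V}) ^ M :=
          ENNReal.ofReal_one_sub_one_sub_pow_le hα₂0.le hα₂1.le hx.le M
  refine ofReal_one_sub_div_le_measure_of_mul_measure_compl_le (hp measurableSet_Iic)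
    hα₁0.le (mul_pos hl0 hδ₂0) ?_
  calc ENNReal.ofReal (l * δ₂) * Px {x | Pd {d | (x, d) ∈ V} ≤ ENNReal.ofReal α₂}ᶜ
      ≤ ENNReal.ofReal (l * δ₂) *
          Px {x | ENNReal.ofReal (l * δ₂) ≤ 1 - (1 - Pd {d | (x, d) ∈ V}) ^ M} := by
        gcongr
        exact fun x hx => hhit x (not_le.mp hx)
    _ ≤ ∫⁻ x, 1 - (1 - Pd {d | (x, d) ∈ V}) ^ M ∂Px :=
        mul_meas_ge_le_lintegral₀ (((hp.const_sub 1).pow_const M).const_sub 1).aemeasurable _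
    _ = _ := by rw [prod_pi_exists_slice_eq_lintegral Px Pd hV, Fintype.card_fin]
    _ ≤ ENNReal.ofReal α₁ := hjoint

/-- One-to-many sampling bound: if the probability (under `P_x ⊗ P_d^M`) that some of
the `M` disturbance draws violates at state `x` is at most `α₁`, and `M` meets the
Hoeffding bound, then for at least a `1 − α₁/(l·δ₂)` fraction of states the slice
violation probability is at most `α₂`. -/
theorem pac_one_to_many_slice_bound {X D : Type*} [MeasurableSpace X] [MeasurableSpace D]
    (Px : Measure X) (Pd : Measure D)
    [IsProbabilityMeasure Px] [IsProbabilityMeasure Pd]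
    (V : Set (X × D)) (hV : MeasurableSet V)
    (M : ℕ) (hM : 1 ≤ M)
    (α₁ α₂ l δ₂ : ℝ)
    (hα₁ : α₁ ∈ Set.Ioo (0 : ℝ) 1) (hα₂ : α₂ ∈ Set.Ioo (0 : ℝ) 1)
    (hl : l ∈ Set.Ioo (0 : ℝ) 1) (hδ₂ : δ₂ ∈ Set.Ioo (0 : ℝ) 1)
    (hlt : α₁ < l * δ₂)
    (hMbound : (M : ℝ) ≥ (1 / (2 * α₂ ^ 2)) * Real.log (1 / ((1 - l) * δ₂)))
    (hjoint : (Px.prod (Measure.pi fun _ : Fin M => Pd))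
        {p : X × (Fin M → D) | ∃ j, (p.1, p.2 j) ∈ V} ≤ ENNReal.ofReal α₁) :
    Px {x | Pd {d | (x, d) ∈ V} ≤ ENNReal.ofReal α₂} ≥
      ENNReal.ofReal (1 - α₁ / (l * δ₂)) :=
  pac_one_to_many_slice_bound_general Px Pd V hV M α₁ α₂ l δ₂ hα₁ hα₂ hl hδ₂ hMbound hjoint
end

section
/- Let (X, 𝒳, P_x) and (D, 𝒟, P_d) be probability spaces, g : X × D → ℝ measurable with respect to the product σ-algebra with 0 ≤ g(x,d) ≤ U for all (x,d), where U > 0, and let c : X → ℝ be measurable. Let τ > 0, and let M ≥ 1 be an integer and α₁, l, δ₂ ∈ (0,1) with α₁ < l·δ₂ and M ≥ (U²/(2·τ²))·ln(1/((1−l)·δ₂)). If (P_x ⊗ P_d^M){(x, d₁,…,d_M) : (1/M)·Σ_{j=1}^M g(x, d_j) > c(x) − τ} ≤ α₁, then P_x{x ∈ X : ∫ g(x,d) dP_d(d) ≤ c(x)} ≥ 1 − α₁/(l·δ₂). -/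
open MeasureTheory

/-!
If `∫ g(x, ·) dP_d > c(x)`, then the empirical mean of `M` samples falls to `c(x) - τ` or below
only if it lies `τ` below its expectation, which by Hoeffding's inequality has probability at most
`exp(-2Mτ²/U²) ≤ (1 - l)δ₂`. So for each such `x` the section of the joint event has
`P_d^M`-probability at least `1 - (1 - l)δ₂ ≥ lδ₂`, and Markov's inequality for the sections
bounds the `P_x`-measure of these `x` by `α₁ / (lδ₂)`.
-/

open ProbabilityTheory Real
open scoped NNReal ENNReal

lemma Real.exp_neg_div_le_of_mul_log_inv_le {k s x : ℝ} (hk : 0 < k) (hs : 0 < s)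
    (h : k * log (1 / s) ≤ x) : exp (-x / k) ≤ s := by
  rw [← le_log_iff_exp_le hs, div_le_iff₀ hk]
  rw [one_div, log_inv] at h
  linarith

namespace MeasureTheory

lemma ofReal_one_sub_le_measure {Ω : Type*} [MeasurableSpace Ω] {μ : Measure Ω}
    [IsProbabilityMeasure μ] {s : Set Ω} {a : ℝ} (ha : 0 ≤ a) (h : μ sᶜ ≤ ENNReal.ofReal a) :
    ENNReal.ofReal (1 - a) ≤ μ s := by
  rw [ENNReal.ofReal_sub _ ha, ENNReal.ofReal_one, tsub_le_iff_right]
  calc 1 = μ Set.univ := measure_univ.symm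
    _ ≤ μ s + μ sᶜ := measure_univ_le_add_compl s
    _ ≤ μ s + ENNReal.ofReal a := by gcongr

lemma Measure.mul_measure_le_prod_of_le_measure_prodMk {α β : Type*}
    [MeasurableSpace α] [MeasurableSpace β] (μ : Measure α) (ν : Measure β) [SFinite ν]
    {s : Set (α × β)} {t : Set α} {r : ℝ≥0∞} (h : ∀ x ∈ t, r ≤ ν (Prod.mk x ⁻¹' s)) :
    r * μ t ≤ μ.prod ν s := by
  set S := toMeasurable (μ.prod ν) s
  have hS : MeasurableSet S := measurableSet_toMeasurable _ s
  calc r * μ t ≤ r * μ {x | r ≤ ν (Prod.mk x ⁻¹' S)} := by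
        gcongr
        exact fun x hx ↦
          (h x hx).trans (measure_mono (Set.preimage_mono (subset_toMeasurable _ s)))
    _ ≤ ∫⁻ x, ν (Prod.mk x ⁻¹' S) ∂μ :=
        mul_meas_ge_le_lintegral (measurable_measure_prodMk_left hS) r
    _ = μ.prod ν s := by rw [← Measure.prod_apply hS, measure_toMeasurable]

end MeasureTheory

namespace ProbabilityTheory

variable {Ω : Type*} [MeasurableSpace Ω] {μ : Measure Ω} [IsProbabilityMeasure μ]

lemma HasSubgaussianMGF.comp_eval {X : Ω → ℝ} {c : ℝ≥0} (h : HasSubgaussianMGF X c μ)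
    {ι : Type*} [Fintype ι] (i : ι) :
    HasSubgaussianMGF (fun ω : ι → Ω ↦ X (ω i)) c (Measure.pi fun _ ↦ μ) :=
  .of_map (measurable_pi_apply i).aemeasurable (by rwa [(measurePreserving_eval _ i).map_eq])

lemma measureReal_pi_sum_le_le {X : Ω → ℝ} {a b : ℝ} (hX : AEMeasurable X μ)
    (hab : ∀ᵐ ω ∂μ, X ω ∈ Set.Icc a b) (n : ℕ) {t : ℝ} (ht : 0 ≤ t) :
    (Measure.pi fun _ : Fin n ↦ μ).real {ω | ∑ i, X (ω i) ≤ n * (μ[X] - t)} ≤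
      exp (-2 * n * t ^ 2 / (b - a) ^ 2) := by
  have hY := (hasSubgaussianMGF_of_mem_Icc hX hab).neg
  have hindep := iIndepFun_pi (μ := fun _ : Fin n ↦ μ) (fun _ ↦ hY.aemeasurable)
  have := HasSubgaussianMGF.measure_sum_ge_le_of_iIndepFun hindep (s := Finset.univ)
    (fun i _ ↦ hY.comp_eval i) (ε := n * t) (by positivity)
  convert this using 2
  · ext ω
    simp only [Set.mem_ofPred_eq, Pi.neg_apply, neg_sub, Finset.sum_sub_distrib,
      Finset.sum_const, Finset.card_univ, Fintype.card_fin, nsmul_eq_mul]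
    constructor <;> intro <;> linarith
  · push_cast
    simp only [Finset.sum_const, Finset.card_univ, Fintype.card_fin, nsmul_eq_mul,
      Real.norm_eq_abs, div_pow, sq_abs]
    rcases n.eq_zero_or_pos with rfl | hn
    · simp
    · field_simp

lemma measure_pi_mean_le_sub_le {X : Ω → ℝ} {a b : ℝ} (hX : AEMeasurable X μ)
    (hab : ∀ᵐ ω ∂μ, X ω ∈ Set.Icc a b) {n : ℕ} (hn : 0 < n) {c t : ℝ} (ht : 0 ≤ t)
    (hc : c ≤ μ[X]) :
    (Measure.pi fun _ : Fin n ↦ μ) {ω | 1 / (n : ℝ) * ∑ i, X (ω i) ≤ c - t} ≤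
      ENNReal.ofReal (exp (-2 * n * t ^ 2 / (b - a) ^ 2)) := by
  have hn' : (0 : ℝ) < n := by exact_mod_cast hn
  rw [← ofReal_measureReal]
  refine ENNReal.ofReal_le_ofReal (le_trans (measureReal_mono fun ω hω ↦ ?_)
    (measureReal_pi_sum_le_le hX hab n ht))
  simp only [Set.mem_ofPred_eq, one_div, inv_mul_le_iff₀ hn'] at hω ⊢
  nlinarith

end ProbabilityTheory

theorem pac_bounded_mean_threshold_general {X D : Type*} [MeasurableSpace X] [MeasurableSpace D]
    (Px : Measure X) (Pd : Measure D)
    [IsProbabilityMeasure Px] [IsProbabilityMeasure Pd]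
    (g : X × D → ℝ) (hg : Measurable g)
    (U : ℝ) (hU : 0 < U) (hgbdd : ∀ p : X × D, 0 ≤ g p ∧ g p ≤ U)
    (c : X → ℝ)
    (τ : ℝ) (hτ : 0 < τ)
    (M : ℕ) (hM : 1 ≤ M)
    (α₁ l δ₂ : ℝ)
    (hα₁ : α₁ ∈ Set.Ioo (0 : ℝ) 1) (hl : l ∈ Set.Ioo (0 : ℝ) 1)
    (hδ₂ : δ₂ ∈ Set.Ioo (0 : ℝ) 1)
    (hMbound : (M : ℝ) ≥ (U ^ 2 / (2 * τ ^ 2)) * Real.log (1 / ((1 - l) * δ₂)))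
    (hjoint : (Px.prod (Measure.pi fun _ : Fin M => Pd))
        {p : X × (Fin M → D) | (1 / (M : ℝ)) * ∑ j, g (p.1, p.2 j) > c p.1 - τ} ≤
      ENNReal.ofReal α₁) :
    Px {x | (∫ d, g (x, d) ∂Pd) ≤ c x} ≥ ENNReal.ofReal (1 - α₁ / (l * δ₂)) := by
  obtain ⟨hl0, hl1⟩ := hl
  obtain ⟨hδ₂0, hδ₂1⟩ := hδ₂
  have hε : 0 < (1 - l) * δ₂ := by nlinarith
  set ν := Measure.pi fun _ : Fin M => Pd
  set A := {p : X × (Fin M → D) | (1 / (M : ℝ)) * ∑ j, g (p.1, p.2 j) > c p.1 - τ}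
  have hexp : exp (-2 * M * τ ^ 2 / (U - 0) ^ 2) ≤ (1 - l) * δ₂ := by
    convert exp_neg_div_le_of_mul_log_inv_le (by positivity) hε hMbound using 2
    rw [sub_zero]
    field_simp
  have hsection : ∀ x ∈ {x | (∫ d, g (x, d) ∂Pd) ≤ c x}ᶜ,
      ENNReal.ofReal (l * δ₂) ≤ ν (Prod.mk x ⁻¹' A) := by
    intro x (hx : ¬ _ ≤ c x)
    have htail : ν (Prod.mk x ⁻¹' A)ᶜ ≤ ENNReal.ofReal ((1 - l) * δ₂) := calc
      ν (Prod.mk x ⁻¹' A)ᶜ ≤ ν {ω | 1 / (M : ℝ) * ∑ j, g (x, ω j) ≤ c x - τ} :=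
          measure_mono fun ω hω ↦ by simpa [A] using hω
      _ ≤ ENNReal.ofReal (exp (-2 * M * τ ^ 2 / (U - 0) ^ 2)) :=
          measure_pi_mean_le_sub_le (hg.comp measurable_prodMk_left).aemeasurable
            (.of_forall fun d ↦ hgbdd (x, d)) hM hτ.le (not_le.1 hx).le
      _ ≤ ENNReal.ofReal ((1 - l) * δ₂) := ENNReal.ofReal_le_ofReal hexp
    exact (ENNReal.ofReal_le_ofReal (by nlinarith)).trans (ofReal_one_sub_le_measure hε.le htail)
  have hbad : Px {x | (∫ d, g (x, d) ∂Pd) ≤ c x}ᶜ ≤ ENNReal.ofReal (α₁ / (l * δ₂)) := by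
    rw [ENNReal.ofReal_div_of_pos (by positivity), ENNReal.le_div_iff_mul_le
      (.inl (ENNReal.ofReal_pos.2 (by positivity)).ne') (.inl ENNReal.ofReal_ne_top), mul_comm]
    exact (Px.mul_measure_le_prod_of_le_measure_prodMk ν hsection).trans hjoint
  exact ofReal_one_sub_le_measure (by have := hα₁.1; positivity) hbad

/-- Markov + Hoeffding for bounded costs with state-dependent thresholds: if the
probability (under `P_x ⊗ P_d^M`) that the empirical mean of `g(x,·)` over `M` draws
exceeds `c(x) − τ` is at most `α₁`, and `M` meets the Hoeffding bound for range `[0,U]`,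
then for at least a `1 − α₁/(l·δ₂)` fraction of states the true mean
`∫ g(x,d) dP_d` is at most `c(x)`. -/
theorem pac_bounded_mean_threshold {X D : Type*} [MeasurableSpace X] [MeasurableSpace D]
    (Px : Measure X) (Pd : Measure D)
    [IsProbabilityMeasure Px] [IsProbabilityMeasure Pd]
    (g : X × D → ℝ) (hg : Measurable g)
    (U : ℝ) (hU : 0 < U) (hgbdd : ∀ p : X × D, 0 ≤ g p ∧ g p ≤ U)
    (c : X → ℝ) (hc : Measurable c)
    (τ : ℝ) (hτ : 0 < τ)
    (M : ℕ) (hM : 1 ≤ M)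
    (α₁ l δ₂ : ℝ)
    (hα₁ : α₁ ∈ Set.Ioo (0 : ℝ) 1) (hl : l ∈ Set.Ioo (0 : ℝ) 1)
    (hδ₂ : δ₂ ∈ Set.Ioo (0 : ℝ) 1)
    (hlt : α₁ < l * δ₂)
    (hMbound : (M : ℝ) ≥ (U ^ 2 / (2 * τ ^ 2)) * Real.log (1 / ((1 - l) * δ₂)))
    (hjoint : (Px.prod (Measure.pi fun _ : Fin M => Pd))
        {p : X × (Fin M → D) | (1 / (M : ℝ)) * ∑ j, g (p.1, p.2 j) > c p.1 - τ} ≤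
      ENNReal.ofReal α₁) :
    Px {x | (∫ d, g (x, d) ∂Pd) ≤ c x} ≥ ENNReal.ofReal (1 - α₁ / (l * δ₂)) :=
  pac_bounded_mean_threshold_general Px Pd g hg U hU hgbdd c τ hτ M hM α₁ l δ₂ hα₁ hl hδ₂ hMbound
    hjoint
end

section
/- Let X ⊆ ℝⁿ be a Borel set, P_x a probability measure on X, (D, 𝒟, P_d) a probability space, and f : X × D → ℝⁿ measurable with respect to the product σ-algebra. Let U ≥ 1 and let h : ℝⁿ → ℝ be Borel measurable with 0 ≤ h(y) ≤ U for all y ∈ ℝⁿ and h(y) ≥ 1 for all y ∈ ℝⁿ \ X. Let λ ∈ [0,1], τ > 0, and let M ≥ 1 be an integer and α₁, l, δ₂ ∈ (0,1) with α₁ < l·δ₂ and M ≥ (U²/(2·τ²))·ln(1/((1−l)·δ₂)). If (P_x ⊗ P_d^M){(x, d₁,…,d_M) : (1/M)·Σ_{j=1}^M h(f(x, d_j)) > h(x) + λ − τ} ≤ α₁, then P_x{x ∈ X : P_d({d ∈ D : f(x,d) ∈ X}) ≥ 1 − h(x) − λ} ≥ 1 − α₁/(l·δ₂). -/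
/-!
At a state `x` where the barrier condition `∫ h(f(x, d)) dP_d ≤ h(x) + λ` holds, Markov's
inequality for `h ∘ f(x, ·) ≥ 1_{f(x, ·) ∉ X}` gives safety probability `≥ 1 - h(x) - λ`.
At a state where it fails, Hoeffding's inequality for the `M` i.i.d. samples of
`h(f(x, ·)) ∈ [0, U]` and the bound on `M` show that the section of the joint exceedance event
over `x` has `P_d^M`-probability `≥ 1 - (1 - l)δ₂ ≥ lδ₂`. Integrating over `x` (Tonelli),
`lδ₂ · P_x(failing states) ≤ α₁`.
-/

open MeasureTheory ProbabilityTheory Real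

section Hoeffding

variable {D : Type*} [MeasurableSpace D] {Pd : Measure D} [IsProbabilityMeasure Pd]
  {Y : D → ℝ} {a b τ : ℝ}

theorem measureReal_pi_sum_le_mul_integral_sub_le (hY : Measurable Y)
    (hYab : ∀ d, Y d ∈ Set.Icc a b) (M : ℕ) (hτ : 0 ≤ τ) :
    (Measure.pi fun _ : Fin M => Pd).real {w | ∑ j, Y (w j) ≤ M * (∫ d, Y d ∂Pd - τ)} ≤
      exp (-(2 * M * τ ^ 2 / (b - a) ^ 2)) := by
  set ν := Measure.pi fun _ : Fin M => Pd
  have hsubG : HasSubgaussianMGF (fun d => ∫ d, Y d ∂Pd - Y d) ((‖b - a‖₊ / 2) ^ 2) Pd := by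
    convert (hasSubgaussianMGF_of_mem_Icc (μ := Pd) hY.aemeasurable (ae_of_all _ hYab)).neg
      using 1
    ext d
    simp
  have hsubG_pi : ∀ j : Fin M, HasSubgaussianMGF (fun w : Fin M → D => ∫ d, Y d ∂Pd - Y (w j))
      ((‖b - a‖₊ / 2) ^ 2) ν := fun j =>
    HasSubgaussianMGF.of_map (X := fun d => ∫ d, Y d ∂Pd - Y d)
      (measurable_pi_apply j).aemeasurable
      (by rwa [(measurePreserving_eval (fun _ => Pd) j).map_eq])
  have hindep : iIndepFun (fun (j : Fin M) (w : Fin M → D) => ∫ d, Y d ∂Pd - Y (w j)) ν :=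
    iIndepFun_pi (X := fun _ d => ∫ d, Y d ∂Pd - Y d) fun _ => by fun_prop
  have hset : {w : Fin M → D | ∑ j, Y (w j) ≤ M * (∫ d, Y d ∂Pd - τ)} =
      {w | M * τ ≤ ∑ j, (∫ d, Y d ∂Pd - Y (w j))} := by
    ext w
    simp only [Set.mem_ofPred_eq, Finset.sum_sub_distrib, Finset.sum_const, Finset.card_univ,
      Fintype.card_fin, nsmul_eq_mul]
    constructor <;> intro h <;> linarith
  have hexp : (M * τ) ^ 2 / (2 * ((∑ _j : Fin M, (‖b - a‖₊ / 2) ^ 2 : NNReal) : ℝ)) =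
      2 * M * τ ^ 2 / (b - a) ^ 2 := by
    rcases eq_or_ne M 0 with rfl | hM
    · simp
    simp only [Finset.sum_const, Finset.card_univ, Fintype.card_fin, nsmul_eq_mul]
    push_cast
    rw [Real.norm_eq_abs, div_pow, sq_abs]
    field_simp
  rw [hset, ← hexp, ← neg_div]
  exact HasSubgaussianMGF.measure_sum_ge_le_of_iIndepFun hindep (fun j _ => hsubG_pi j)
    (by positivity)

theorem one_sub_exp_le_measureReal_pi_sub_lt_mean (hY : Measurable Y)
    (hYab : ∀ d, Y d ∈ Set.Icc a b) {M : ℕ} (hM : 0 < M) (hτ : 0 ≤ τ) {c : ℝ}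
    (hc : c ≤ ∫ d, Y d ∂Pd) :
    1 - exp (-(2 * M * τ ^ 2 / (b - a) ^ 2)) ≤
      (Measure.pi fun _ : Fin M => Pd).real {w | c - τ < (1 / (M : ℝ)) * ∑ j, Y (w j)} := by
  have hMpos : (0 : ℝ) < M := Nat.cast_pos.2 hM
  have hcompl : {w : Fin M → D | c - τ < (1 / (M : ℝ)) * ∑ j, Y (w j)}ᶜ ⊆
      {w | ∑ j, Y (w j) ≤ M * (∫ d, Y d ∂Pd - τ)} := by
    intro w hw
    simp only [Set.mem_compl_iff, Set.mem_ofPred_eq, not_lt, one_div,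
      inv_mul_le_iff₀ hMpos] at hw ⊢
    nlinarith
  have hmeas : MeasurableSet {w : Fin M → D | c - τ < (1 / (M : ℝ)) * ∑ j, Y (w j)} :=
    measurableSet_lt measurable_const (by fun_prop)
  have htail := (measureReal_mono hcompl).trans
    (measureReal_pi_sum_le_mul_integral_sub_le hY hYab M hτ)
  rw [probReal_compl_eq_one_sub hmeas] at htail
  linarith

end Hoeffding

theorem ofReal_one_sub_integral_le_measure {Ω : Type*} [MeasurableSpace Ω] {μ : Measure Ω}
    [IsProbabilityMeasure μ] {g : Ω → ℝ} {A : Set Ω} (hA : MeasurableSet A)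
    (hg : Integrable g μ) (hg0 : 0 ≤ g) (hgA : ∀ ω ∉ A, 1 ≤ g ω) :
    ENNReal.ofReal (1 - ∫ ω, g ω ∂μ) ≤ μ A := by
  have hmarkov : μ.real Aᶜ ≤ ∫ ω, g ω ∂μ := by
    calc μ.real Aᶜ ≤ μ.real {ω | 1 ≤ g ω} := measureReal_mono hgA
      _ = 1 * μ.real {ω | 1 ≤ g ω} := (one_mul _).symm
      _ ≤ ∫ ω, g ω ∂μ := mul_meas_ge_le_integral_of_nonneg (ae_of_all _ hg0) hg 1
  rw [← ofReal_measureReal]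
  refine ENNReal.ofReal_le_ofReal ?_
  rw [probReal_compl_eq_one_sub hA] at hmarkov
  linarith

theorem exp_neg_le_of_le_mul_log_one_div {M U τ ε : ℝ} (hU : U ≠ 0) (hτ : 0 < τ) (hε : 0 < ε)
    (hM : U ^ 2 / (2 * τ ^ 2) * log (1 / ε) ≤ M) :
    exp (-(2 * M * τ ^ 2 / U ^ 2)) ≤ ε := by
  rw [← le_log_iff_exp_le hε, neg_le, le_div_iff₀ (by positivity), ← log_inv, ← one_div]
  rw [div_mul_eq_mul_div, div_le_iff₀ (by positivity)] at hM
  linarith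

theorem mul_measure_le_prod_of_le_measure_preimage_prodMk {α β : Type*} [MeasurableSpace α]
    [MeasurableSpace β] {μ : Measure α} {ν : Measure β} [SFinite ν] {S : Set (α × β)}
    (hS : MeasurableSet S) {B : Set α} {c : ENNReal} (hc : ∀ x ∈ B, c ≤ ν (Prod.mk x ⁻¹' S)) :
    c * μ B ≤ μ.prod ν S := by
  calc c * μ B = ∫⁻ _ in B, c ∂μ := (setLIntegral_const B c).symm
    _ ≤ ∫⁻ x in B, ν (Prod.mk x ⁻¹' S) ∂μ :=
      setLIntegral_mono (measurable_measure_prodMk_left hS) hc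
    _ ≤ ∫⁻ x, ν (Prod.mk x ⁻¹' S) ∂μ := setLIntegral_le_lintegral B _
    _ = μ.prod ν S := (Measure.prod_apply hS).symm

theorem pac_one_step_safety_III_general {n : ℕ} {D : Type*} [MeasurableSpace D]
    (X : Set (Fin n → ℝ)) (hX : MeasurableSet X)
    (Px : Measure ↥X) (Pd : Measure D)
    [IsProbabilityMeasure Px] [IsProbabilityMeasure Pd]
    (f : ↥X × D → (Fin n → ℝ)) (hf : Measurable f)
    (U : ℝ) (hU : 1 ≤ U)
    (h : (Fin n → ℝ) → ℝ) (hh : Measurable h)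
    (hbdd : ∀ y, 0 ≤ h y ∧ h y ≤ U)
    (hout : ∀ y, y ∉ X → 1 ≤ h y)
    (lam : ℝ)
    (τ : ℝ) (hτ : 0 < τ)
    (M : ℕ) (hM : 1 ≤ M)
    (α₁ l δ₂ : ℝ)
    (hα₁ : α₁ ∈ Set.Ioo (0 : ℝ) 1) (hl : l ∈ Set.Ioo (0 : ℝ) 1)
    (hδ₂ : δ₂ ∈ Set.Ioo (0 : ℝ) 1)
    (hMbound : (M : ℝ) ≥ (U ^ 2 / (2 * τ ^ 2)) * Real.log (1 / ((1 - l) * δ₂)))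
    (hjoint : (Px.prod (Measure.pi fun _ : Fin M => Pd))
        {p : ↥X × (Fin M → D) |
          (1 / (M : ℝ)) * ∑ j, h (f (p.1, p.2 j)) > h ↑p.1 + lam - τ} ≤
      ENNReal.ofReal α₁) :
    Px {x : ↥X | Pd {d | f (x, d) ∈ X} ≥ ENNReal.ofReal (1 - h ↑x - lam)} ≥
      ENNReal.ofReal (1 - α₁ / (l * δ₂)) := by
  obtain ⟨hl0, hl1⟩ := hl
  obtain ⟨hδ0, hδ1⟩ := hδ₂
  have hbdd' : ∀ y, h y ∈ Set.Icc 0 U := fun y => hbdd y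
  set ν := Measure.pi fun _ : Fin M => Pd
  set S := {p : ↥X × (Fin M → D) | (1 / (M : ℝ)) * ∑ j, h (f (p.1, p.2 j)) > h ↑p.1 + lam - τ}
  set B := {x : ↥X | h x + lam < ∫ d, h (f (x, d)) ∂Pd}
  have hexp : exp (-(2 * M * τ ^ 2 / (U - 0) ^ 2)) ≤ (1 - l) * δ₂ := by
    rw [sub_zero]
    exact exp_neg_le_of_le_mul_log_one_div (by positivity) hτ (mul_pos (by linarith) hδ0) hMbound
  have hsection : ∀ x ∈ B, ENNReal.ofReal (l * δ₂) ≤ ν (Prod.mk x ⁻¹' S) := by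
    intro x hx
    rw [← ofReal_measureReal]
    refine ENNReal.ofReal_le_ofReal (le_trans ?_
      (one_sub_exp_le_measureReal_pi_sub_lt_mean (by fun_prop) (fun d => hbdd' _) hM hτ.le hx.le))
    linarith
  have hPxB : Px B ≤ ENNReal.ofReal (α₁ / (l * δ₂)) := by
    rw [ENNReal.ofReal_div_of_pos (by positivity),
      ENNReal.le_div_iff_mul_le (.inl (by simp; positivity)) (.inl (by simp)), mul_comm]
    exact (mul_measure_le_prod_of_le_measure_preimage_prodMk
      (measurableSet_lt (by fun_prop) (by fun_prop)) hsection).trans hjoint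
  have hgood : Bᶜ ⊆ {x : ↥X | Pd {d | f (x, d) ∈ X} ≥ ENNReal.ofReal (1 - h ↑x - lam)} := by
    intro x hx
    have hx' : ∫ d, h (f (x, d)) ∂Pd ≤ h x + lam := not_lt.1 hx
    refine le_trans (ENNReal.ofReal_le_ofReal (by linarith :
      1 - h x - lam ≤ 1 - ∫ d, h (f (x, d)) ∂Pd)) ?_
    exact ofReal_one_sub_integral_le_measure (hX.preimage (by fun_prop))
      (.of_mem_Icc 0 U (by fun_prop) (ae_of_all _ fun d => hbdd' _)) (fun d => (hbdd _).1)
      (fun d => hout _)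
  calc ENNReal.ofReal (1 - α₁ / (l * δ₂))
      = 1 - ENNReal.ofReal (α₁ / (l * δ₂)) := by
        rw [ENNReal.ofReal_sub _ (div_nonneg hα₁.1.le (by positivity)), ENNReal.ofReal_one]
    _ ≤ 1 - Px B := tsub_le_tsub_left hPxB 1
    _ ≤ Px Bᶜ := tsub_le_iff_left.2 (measure_univ (μ := Px) ▸ measure_univ_le_add_compl B)
    _ ≤ _ := measure_mono hgood

/-- PAC safety certification III (stochastic barrier form, one-to-many samples): if the
probability (under `P_x ⊗ P_d^M`) that the empirical mean of `h ∘ f` over `M` draws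
exceeds `h x + λ − τ` is at most `α₁`, and `M` meets the Hoeffding bound for range
`[0,U]`, then for at least a `1 − α₁/(l·δ₂)` fraction of states `x ∈ X` the one-step
safety probability is at least `1 − h x − λ`. -/
theorem pac_one_step_safety_III {n : ℕ} {D : Type*} [MeasurableSpace D]
    (X : Set (Fin n → ℝ)) (hX : MeasurableSet X)
    (Px : Measure ↥X) (Pd : Measure D)
    [IsProbabilityMeasure Px] [IsProbabilityMeasure Pd]
    (f : ↥X × D → (Fin n → ℝ)) (hf : Measurable f)
    (U : ℝ) (hU : 1 ≤ U)
    (h : (Fin n → ℝ) → ℝ) (hh : Measurable h)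
    (hbdd : ∀ y, 0 ≤ h y ∧ h y ≤ U)
    (hout : ∀ y, y ∉ X → 1 ≤ h y)
    (lam : ℝ) (hlam : lam ∈ Set.Icc (0 : ℝ) 1)
    (τ : ℝ) (hτ : 0 < τ)
    (M : ℕ) (hM : 1 ≤ M)
    (α₁ l δ₂ : ℝ)
    (hα₁ : α₁ ∈ Set.Ioo (0 : ℝ) 1) (hl : l ∈ Set.Ioo (0 : ℝ) 1)
    (hδ₂ : δ₂ ∈ Set.Ioo (0 : ℝ) 1)
    (hlt : α₁ < l * δ₂)
    (hMbound : (M : ℝ) ≥ (U ^ 2 / (2 * τ ^ 2)) * Real.log (1 / ((1 - l) * δ₂)))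
    (hjoint : (Px.prod (Measure.pi fun _ : Fin M => Pd))
        {p : ↥X × (Fin M → D) |
          (1 / (M : ℝ)) * ∑ j, h (f (p.1, p.2 j)) > h ↑p.1 + lam - τ} ≤
      ENNReal.ofReal α₁) :
    Px {x : ↥X | Pd {d | f (x, d) ∈ X} ≥ ENNReal.ofReal (1 - h ↑x - lam)} ≥
      ENNReal.ofReal (1 - α₁ / (l * δ₂)) :=
  pac_one_step_safety_III_general X hX Px Pd f hf U hU h hh hbdd hout lam τ hτ M hM α₁ l δ₂ hα₁ hl
    hδ₂ hMbound hjoint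
end

section
/- Let (Ω, ℱ, P_S), (X, 𝒳, P_x), and (D, 𝒟, P_d) be probability spaces. Let G : Ω × X × D → ℝ be measurable with respect to the product σ-algebra with 0 ≤ G ≤ U for some U > 0, and let C : Ω × X → ℝ be measurable. Let τ > 0, M ≥ 1 an integer, and α₁, l, δ₁, δ₂ ∈ (0,1) with α₁ < l·δ₂ and M ≥ (U²/(2·τ²))·ln(1/((1−l)·δ₂)). If P_S{ω : (P_x ⊗ P_d^M)({(x, d₁,…,d_M) : (1/M)·Σ_{j=1}^M G(ω, x, d_j) > C(ω, x) − τ}) ≤ α₁} ≥ 1 − δ₁, then P_S{ω : P_x({x ∈ X : ∫ G(ω, x, d) dP_d(d) ≤ C(ω, x)}) ≥ 1 − α₁/(l·δ₂)} ≥ 1 − δ₁. -/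
/-!
If the true mean `∫ G(ω,x,·) dP_d` exceeds `C(ω,x)`, Hoeffding's inequality bounds the chance
that the empirical mean of `M` draws is at most `C(ω,x) − τ` by `exp(−2Mτ²/U²) ≤ (1−l)δ₂`, so
the `x`-slice of the empirical event has `P_d^M`-measure at least `1 − (1−l)δ₂ ≥ lδ₂`. By
Tonelli the empirical event then has product measure at least `lδ₂ · P_x(bad states)`, so on
every sample `ω` where that measure is at most `α₁`, the bad states have `P_x`-measure at most
`α₁/(lδ₂)`. The confidence event for the hypothesis is thus contained in the one for the
conclusion.
-/
open MeasureTheory ProbabilityTheory Real Set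

section Hoeffding

variable {D : Type*} [MeasurableSpace D] {μ : Measure D} [IsProbabilityMeasure μ]
  {Y : D → ℝ} {a b τ : ℝ}

theorem measureReal_pi_sum_le_le_exp (hY : AEMeasurable Y μ) (hYab : ∀ᵐ d ∂μ, Y d ∈ Icc a b)
    (n : ℕ) (hτ : 0 ≤ τ) :
    (Measure.pi fun _ : Fin n => μ).real {x | ∑ i, Y (x i) ≤ n * (μ[Y] - τ)} ≤
      exp (-(2 * τ ^ 2 / (b - a) ^ 2 * n)) := by
  have hsubG : ∀ i : Fin n, HasSubgaussianMGF (fun x : Fin n → D => μ[Y] - Y (x i))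
      ((‖b - a‖₊ / 2) ^ 2) (Measure.pi fun _ => μ) := fun i => by
    have hi := measurePreserving_eval (fun _ : Fin n => μ) i
    have hμ := (hasSubgaussianMGF_of_mem_Icc hY hYab).neg
    rw [← hi.map_eq] at hμ
    exact (hμ.of_map hi.measurable.aemeasurable).congr (ae_of_all _ fun x => by simp [hi.map_eq])
  have hindep : iIndepFun (fun (i : Fin n) (x : Fin n → D) => μ[Y] - Y (x i))
      (Measure.pi fun _ => μ) :=
    iIndepFun_pi (X := fun _ d => μ[Y] - Y d) fun _ => aemeasurable_const.sub hY
  have h := HasSubgaussianMGF.measure_sum_ge_le_of_iIndepFun hindep (s := Finset.univ)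
    (fun i _ => hsubG i) (mul_nonneg n.cast_nonneg hτ)
  convert h using 2
  · ext x
    simp only [mem_ofPred_eq, Finset.sum_sub_distrib, Finset.sum_const, Finset.card_univ,
      Fintype.card_fin, nsmul_eq_mul]
    constructor <;> intro <;> linarith
  · rcases eq_or_ne n 0 with rfl | hn
    · simp
    push_cast
    rw [Finset.sum_const, Finset.card_univ, Fintype.card_fin, nsmul_eq_mul, Real.norm_eq_abs,
      div_pow, sq_abs]
    field_simp

theorem one_sub_exp_le_measureReal_pi_mean_gt (hY : Measurable Y)
    (hYab : ∀ᵐ d ∂μ, Y d ∈ Icc a b) {n : ℕ} (hn : 0 < n) (hτ : 0 ≤ τ) {t : ℝ} (ht : t ≤ μ[Y]) :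
    1 - exp (-(2 * τ ^ 2 / (b - a) ^ 2 * n)) ≤
      (Measure.pi fun _ : Fin n => μ).real {x | (1 / (n : ℝ)) * ∑ i, Y (x i) > t - τ} := by
  have hmeas : MeasurableSet {x : Fin n → D | (1 / (n : ℝ)) * ∑ i, Y (x i) ≤ t - τ} :=
    measurableSet_le (by fun_prop) measurable_const
  have hsub : {x : Fin n → D | (1 / (n : ℝ)) * ∑ i, Y (x i) ≤ t - τ} ⊆
      {x | ∑ i, Y (x i) ≤ n * (μ[Y] - τ)} := fun x hx => by
    have hn' : (0 : ℝ) < n := Nat.cast_pos.mpr hn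
    rw [mem_ofPred_eq, one_div, inv_mul_le_iff₀ hn'] at hx
    exact hx.trans (by gcongr)
  calc 1 - exp (-(2 * τ ^ 2 / (b - a) ^ 2 * n))
      ≤ 1 - (Measure.pi fun _ : Fin n => μ).real
          {x | (1 / (n : ℝ)) * ∑ i, Y (x i) ≤ t - τ} := by
        gcongr
        exact (measureReal_mono hsub).trans (measureReal_pi_sum_le_le_exp hY.aemeasurable hYab n hτ)
    _ = _ := by
        rw [← probReal_compl_eq_one_sub hmeas]
        simp only [compl_ofPred, not_le, gt_iff_lt]

end Hoeffding

theorem exp_neg_mul_le_of_inv_mul_log_one_div_le {k ε x : ℝ} (hk : 0 < k) (hε : 0 < ε)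
    (h : k⁻¹ * log (1 / ε) ≤ x) : exp (-(k * x)) ≤ ε := by
  rw [← le_log_iff_exp_le hε, neg_le, ← log_inv, ← one_div]
  rwa [inv_mul_le_iff₀ hk] at h

theorem mul_measure_le_prod_of_le_measure_slice {α β : Type*} [MeasurableSpace α]
    [MeasurableSpace β] {μ : Measure α} {ν : Measure β} [SFinite ν] {s : Set (α × β)}
    (hs : MeasurableSet s) {t : Set α} {c : ENNReal} (h : ∀ x ∈ t, c ≤ ν (Prod.mk x ⁻¹' s)) :
    c * μ t ≤ μ.prod ν s :=
  calc c * μ t = ∫⁻ _ in t, c ∂μ := (setLIntegral_const t c).symm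
    _ ≤ ∫⁻ x in t, ν (Prod.mk x ⁻¹' s) ∂μ := setLIntegral_mono (measurable_measure_prodMk_left hs) h
    _ ≤ ∫⁻ x, ν (Prod.mk x ⁻¹' s) ∂μ := setLIntegral_le_lintegral t _
    _ = μ.prod ν s := (Measure.prod_apply hs).symm

theorem ofReal_one_sub_div_le_measure_compl {α : Type*} [MeasurableSpace α] {μ : Measure α}
    [IsProbabilityMeasure μ] {s : Set α} (hs : MeasurableSet s) {p q : ℝ} (hp : 0 < p) (hq : 0 ≤ q)
    (h : ENNReal.ofReal p * μ s ≤ ENNReal.ofReal q) :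
    ENNReal.ofReal (1 - q / p) ≤ μ sᶜ := by
  have hs' : μ s ≤ ENNReal.ofReal (q / p) := by
    rw [ENNReal.ofReal_div_of_pos hp, ENNReal.le_div_iff_mul_le (by simp [hp]) (by simp), mul_comm]
    exact h
  rw [prob_compl_eq_one_sub hs, ENNReal.ofReal_sub 1 (by positivity), ENNReal.ofReal_one]
  exact tsub_le_tsub_left hs' 1

theorem ofReal_one_sub_div_le_measure_integral_le {X D : Type*} [MeasurableSpace X]
    [MeasurableSpace D] {Px : Measure X} {Pd : Measure D} [IsProbabilityMeasure Px]
    [IsProbabilityMeasure Pd] {g : X × D → ℝ} (hg : Measurable g) {a b : ℝ}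
    (hgab : ∀ x, ∀ᵐ d ∂Pd, g (x, d) ∈ Icc a b) {c : X → ℝ} (hc : Measurable c) {τ : ℝ}
    (hτ : 0 ≤ τ) {n : ℕ} (hn : 0 < n) {α β : ℝ} (hα : 0 ≤ α) (hβ : 0 < β)
    (hβexp : β ≤ 1 - exp (-(2 * τ ^ 2 / (b - a) ^ 2 * n)))
    (h : (Px.prod (Measure.pi fun _ : Fin n => Pd))
        {p | (1 / (n : ℝ)) * ∑ i, g (p.1, p.2 i) > c p.1 - τ} ≤ ENNReal.ofReal α) :
    ENNReal.ofReal (1 - α / β) ≤ Px {x | ∫ d, g (x, d) ∂Pd ≤ c x} := by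
  set A : Set (X × (Fin n → D)) := {p | (1 / (n : ℝ)) * ∑ i, g (p.1, p.2 i) > c p.1 - τ}
  have hA : MeasurableSet A := measurableSet_lt (by fun_prop) (by fun_prop)
  set B := {x | c x < ∫ d, g (x, d) ∂Pd}
  have hB : MeasurableSet B :=
    measurableSet_lt hc hg.stronglyMeasurable.integral_prod_right'.measurable
  have hslice : ∀ x ∈ B, ENNReal.ofReal β ≤ (Measure.pi fun _ : Fin n => Pd) (Prod.mk x ⁻¹' A) :=
    fun x hx => by
      rw [← ofReal_measureReal]
      exact ENNReal.ofReal_le_ofReal (hβexp.trans (one_sub_exp_le_measureReal_pi_mean_gt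
        (t := c x) (hg.comp measurable_prodMk_left) (hgab x) hn hτ (le_of_lt hx)))
  have hgood := ofReal_one_sub_div_le_measure_compl hB hβ hα
    ((mul_measure_le_prod_of_le_measure_slice hA hslice).trans h)
  simpa only [B, compl_ofPred, not_lt] using hgood

theorem pac_lift_bounded_mean_bound_general {Ω X D : Type*}
    [MeasurableSpace Ω] [MeasurableSpace X] [MeasurableSpace D]
    (PS : Measure Ω) (Px : Measure X) (Pd : Measure D)
    [IsProbabilityMeasure Px] [IsProbabilityMeasure Pd]
    (G : Ω × X × D → ℝ) (hG : Measurable G)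
    (U : ℝ) (hU : 0 < U) (hGbdd : ∀ q, 0 ≤ G q ∧ G q ≤ U)
    (C : Ω × X → ℝ) (hC : Measurable C)
    (τ : ℝ) (hτ : 0 < τ)
    (M : ℕ) (hM : 1 ≤ M)
    (α₁ l δ₁ δ₂ : ℝ)
    (hα₁ : α₁ ∈ Set.Ioo (0 : ℝ) 1) (hl : l ∈ Set.Ioo (0 : ℝ) 1)
    (hδ₂ : δ₂ ∈ Set.Ioo (0 : ℝ) 1)
    (hMbound : (M : ℝ) ≥ (U ^ 2 / (2 * τ ^ 2)) * Real.log (1 / ((1 - l) * δ₂)))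
    (hconf : PS {ω | (Px.prod (Measure.pi fun _ : Fin M => Pd))
        {p : X × (Fin M → D) |
          (1 / (M : ℝ)) * ∑ j, G (ω, p.1, p.2 j) > C (ω, p.1) - τ} ≤
      ENNReal.ofReal α₁} ≥ ENNReal.ofReal (1 - δ₁)) :
    PS {ω | Px {x | (∫ d, G (ω, x, d) ∂Pd) ≤ C (ω, x)} ≥
        ENNReal.ofReal (1 - α₁ / (l * δ₂))} ≥ ENNReal.ofReal (1 - δ₁) := by
  have hexp : exp (-(2 * τ ^ 2 / (U - 0) ^ 2 * M)) ≤ (1 - l) * δ₂ := by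
    refine exp_neg_mul_le_of_inv_mul_log_one_div_le (by positivity)
      (mul_pos (sub_pos.2 hl.2) hδ₂.1) ?_
    rwa [sub_zero, inv_div]
  refine hconf.trans (measure_mono fun ω hω => ?_)
  exact ofReal_one_sub_div_le_measure_integral_le (g := fun q => G (ω, q))
    (hG.comp measurable_prodMk_left) (fun x => ae_of_all _ fun d => hGbdd _)
    (hC.comp measurable_prodMk_left) hτ.le hM hα₁.1.le (mul_pos hl.1 hδ₂.1)
    (by nlinarith [hδ₂.2]) hω

/-- Lifting the bounded-mean threshold bound through the sampling distribution: if, with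
confidence `1 − δ₁` over the sample `ω`, the probability that the empirical mean of
`G(ω,x,·)` over `M` draws exceeds `C(ω,x) − τ` is at most `α₁`, and `M` meets the
Hoeffding bound for range `[0,U]`, then with the same confidence at least a
`1 − α₁/(l·δ₂)` fraction of states satisfies `∫ G(ω,x,d) dP_d ≤ C(ω,x)`. -/
theorem pac_lift_bounded_mean_bound {Ω X D : Type*}
    [MeasurableSpace Ω] [MeasurableSpace X] [MeasurableSpace D]
    (PS : Measure Ω) (Px : Measure X) (Pd : Measure D)
    [IsProbabilityMeasure PS] [IsProbabilityMeasure Px] [IsProbabilityMeasure Pd]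
    (G : Ω × X × D → ℝ) (hG : Measurable G)
    (U : ℝ) (hU : 0 < U) (hGbdd : ∀ q, 0 ≤ G q ∧ G q ≤ U)
    (C : Ω × X → ℝ) (hC : Measurable C)
    (τ : ℝ) (hτ : 0 < τ)
    (M : ℕ) (hM : 1 ≤ M)
    (α₁ l δ₁ δ₂ : ℝ)
    (hα₁ : α₁ ∈ Set.Ioo (0 : ℝ) 1) (hl : l ∈ Set.Ioo (0 : ℝ) 1)
    (hδ₁ : δ₁ ∈ Set.Ioo (0 : ℝ) 1) (hδ₂ : δ₂ ∈ Set.Ioo (0 : ℝ) 1)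
    (hlt : α₁ < l * δ₂)
    (hMbound : (M : ℝ) ≥ (U ^ 2 / (2 * τ ^ 2)) * Real.log (1 / ((1 - l) * δ₂)))
    (hconf : PS {ω | (Px.prod (Measure.pi fun _ : Fin M => Pd))
        {p : X × (Fin M → D) |
          (1 / (M : ℝ)) * ∑ j, G (ω, p.1, p.2 j) > C (ω, p.1) - τ} ≤
      ENNReal.ofReal α₁} ≥ ENNReal.ofReal (1 - δ₁)) :
    PS {ω | Px {x | (∫ d, G (ω, x, d) ∂Pd) ≤ C (ω, x)} ≥
        ENNReal.ofReal (1 - α₁ / (l * δ₂))} ≥ ENNReal.ofReal (1 - δ₁) :=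
  pac_lift_bounded_mean_bound_general PS Px Pd G hG U hU hGbdd C hC τ hτ M hM α₁ l δ₁ δ₂ hα₁ hl hδ₂
    hMbound hconf
end
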